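/- Let C = {C_1,…,C_k} be a clustering of a finite set X ⊆ ℝ^m with centers μ_j and radii r(C_j), satisfying the γ-margin property with γ ≥ 1, and let ν ≥ 1, ρ ∈ (0,1]. Suppose for every j ∈ [k] there is a representative z_j ∈ C_j with d(z_j, μ_j) < min{2ρ−1, γ−ν+1}·r(C_j). Then for every x ∈ X and every j ∈ [k], the pair (z_j, x) is not confused for the (ν,ρ) local distance-weak oracle; consequently, for the truthful (ν,ρ) local distance-weak oracle Q and every x ∈ X there is exactly one index j with Q(z_j, x) = 1, and x ∈ C_j for that index (i.e., the weak pairwise cluster-assignment query using the representatives z_1,…,z_k returns the correct cluster index for every point). -/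

import Mathlib

open Finset
open scoped Classical

/-- The center (mean) of a finite cluster of points in Euclidean space. -/
noncomputable def ctr {m : ℕ} (C : Finset (EuclideanSpace ℝ (Fin m))) : EuclideanSpace ℝ (Fin m) :=
  (C.card : ℝ)⁻¹ • ∑ x ∈ C, x

/-- The radius of a cluster: the maximal distance of a member to the center. -/
noncomputable def rad {m : ℕ} (C : Finset (EuclideanSpace ℝ (Fin m))) : ℝ :=
  sSup ((fun x => dist x (ctr C)) '' (C : Set (EuclideanSpace ℝ (Fin m))))

/-- Confusion predicate for the (ν, ρ) local distance-weak oracle. -/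
def LocalConfused {m k : ℕ} (Cl : Fin k → Finset (EuclideanSpace ℝ (Fin m))) (ν ρ : ℝ)
    (x y : EuclideanSpace ℝ (Fin m)) : Prop :=
  (∃ i j, i ≠ j ∧ x ∈ Cl i ∧ y ∈ Cl j ∧
    dist x y < (ν - 1) * min (dist x (ctr (Cl i))) (dist y (ctr (Cl j)))) ∨
  (∃ i, x ∈ Cl i ∧ y ∈ Cl i ∧ 2 * ρ * rad (Cl i) < dist x y)

/-- Confusion predicate for the ρ global distance-weak oracle. -/
def GlobalConfused {m k : ℕ} (Cl : Fin k → Finset (EuclideanSpace ℝ (Fin m))) (ρ : ℝ)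
    (x y : EuclideanSpace ℝ (Fin m)) : Prop :=
  (∃ i j, i ≠ j ∧ x ∈ Cl i ∧ y ∈ Cl j ∧
    (ρ * rad (Cl i) < dist x (ctr (Cl i)) ∨ ρ * rad (Cl j) < dist y (ctr (Cl j)))) ∨
  (∃ i, x ∈ Cl i ∧ y ∈ Cl i ∧ 2 * ρ * rad (Cl i) < dist x y)

/-- Two points lie in the same cluster. -/
def SameCluster {m k : ℕ} (Cl : Fin k → Finset (EuclideanSpace ℝ (Fin m)))
    (x y : EuclideanSpace ℝ (Fin m)) : Prop :=
  ∃ i, x ∈ Cl i ∧ y ∈ Cl i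

/-- The truthful (ν, ρ) local distance-weak oracle: answers 0 on confused pairs,
1 on same-cluster non-confused pairs, and -1 on different-cluster non-confused pairs. -/
noncomputable def localQ {m k : ℕ} (Cl : Fin k → Finset (EuclideanSpace ℝ (Fin m))) (ν ρ : ℝ)
    (x y : EuclideanSpace ℝ (Fin m)) : ℤ :=
  if LocalConfused Cl ν ρ x y then 0 else if SameCluster Cl x y then 1 else -1

/-- The truthful ρ global distance-weak oracle. -/
noncomputable def globalQ {m k : ℕ} (Cl : Fin k → Finset (EuclideanSpace ℝ (Fin m))) (ρ : ℝ)
    (x y : EuclideanSpace ℝ (Fin m)) : ℤ :=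
  if GlobalConfused Cl ρ x y then 0 else if SameCluster Cl x y then 1 else -1

/-!
A representative `z` of its cluster `C` with `d(z, μ) < min(2ρ - 1, γ - ν + 1) · r(C)` is never
confused. For a point `x` of the same cluster, `d(z, x) ≤ d(z, μ) + d(x, μ) < (2ρ - 1) r + r = 2ρ r`.
For a point `x` outside, the margin property at a point of `C` realising the radius gives
`γ r < d(x, μ) ≤ d(z, x) + d(z, μ)`, while `d(z, μ) ≤ r` and `d(z, μ) < (γ - ν + 1) r` give
`ν · d(z, μ) < γ r`; hence `d(z, x) > (ν - 1) d(z, μ)`. The oracle therefore answers `1` on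
`(z_j, x)` exactly when `x ∈ C_j`, and the partition property makes that index unique.
-/

section Radius

variable {m : ℕ} {C : Finset (EuclideanSpace ℝ (Fin m))}

lemma dist_ctr_le_rad {x : EuclideanSpace ℝ (Fin m)} (hx : x ∈ C) : dist x (ctr C) ≤ rad C :=
  le_csSup ((C.finite_toSet.image _).bddAbove) ⟨x, hx, rfl⟩

lemma exists_dist_ctr_eq_rad (hC : C.Nonempty) : ∃ w ∈ C, dist w (ctr C) = rad C := by
  obtain ⟨w, hw, hmax⟩ := C.exists_max_image (fun x => dist x (ctr C)) hC
  refine ⟨w, hw, le_antisymm (dist_ctr_le_rad hw) ?_⟩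
  exact csSup_le ⟨_, w, hw, rfl⟩ (by rintro _ ⟨x, hx, rfl⟩; exact hmax x hx)

lemma mul_rad_lt_of_forall_mul_dist_ctr_lt {γ r : ℝ} (hC : C.Nonempty)
    (h : ∀ w ∈ C, γ * dist w (ctr C) < r) : γ * rad C < r := by
  obtain ⟨w, hw, hrad⟩ := exists_dist_ctr_eq_rad hC
  exact hrad ▸ h w hw

end Radius

section Triangle

variable {α : Type*} [PseudoMetricSpace α] {z x μ : α} {R : ℝ}

lemma dist_lt_two_mul_of_dist_lt {ρ : ℝ} (hz : dist z μ < (2 * ρ - 1) * R) (hx : dist x μ ≤ R) :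
    dist z x < 2 * ρ * R := by
  linarith [dist_triangle_right z x μ]

lemma sub_one_mul_dist_le_dist_of_mul_lt {γ ν : ℝ} (hν : 1 ≤ ν) (hzR : dist z μ ≤ R)
    (hz : dist z μ < (γ - ν + 1) * R) (hx : γ * R < dist x μ) :
    (ν - 1) * dist z μ ≤ dist z x := by
  nlinarith [dist_triangle_left x μ z, mul_nonneg (sub_nonneg.2 hν) (sub_nonneg.2 hzR)]

end Triangle

section Oracle

variable {m k : ℕ} {X : Finset (EuclideanSpace ℝ (Fin m))}
  {Cl : Fin k → Finset (EuclideanSpace ℝ (Fin m))} {z x : EuclideanSpace ℝ (Fin m)}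

theorem not_localConfused_of_dist_ctr_lt (hpart : ∀ x ∈ X, ∃! i, x ∈ Cl i) {γ ν ρ : ℝ}
    (hmargin : ∀ i, ∀ x ∈ Cl i, ∀ y ∈ X, y ∉ Cl i →
      γ * dist x (ctr (Cl i)) < dist y (ctr (Cl i)))
    (hν : 1 ≤ ν) {j : Fin k} (hzX : z ∈ X) (hz : z ∈ Cl j)
    (hzgood : dist z (ctr (Cl j)) < min (2 * ρ - 1) (γ - ν + 1) * rad (Cl j)) (hx : x ∈ X) :
    ¬ LocalConfused Cl ν ρ z x := by
  have hR : 0 ≤ rad (Cl j) := dist_nonneg.trans (dist_ctr_le_rad hz)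
  rintro (⟨a, b, hab, hza, hxb, hlt⟩ | ⟨a, hza, hxa, hlt⟩)
  · obtain rfl : a = j := (hpart z hzX).unique hza hz
    have hxa : x ∉ Cl a := fun hxa => hab ((hpart x hx).unique hxa hxb)
    have hγR : γ * rad (Cl a) < dist x (ctr (Cl a)) :=
      mul_rad_lt_of_forall_mul_dist_ctr_lt ⟨z, hz⟩ fun w hw => hmargin a w hw x hx hxa
    have hfar := sub_one_mul_dist_le_dist_of_mul_lt hν (dist_ctr_le_rad hz)
      (hzgood.trans_le (mul_le_mul_of_nonneg_right (min_le_right _ _) hR)) hγR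
    have hmin := mul_le_mul_of_nonneg_left (min_le_left (dist z (ctr (Cl a)))
      (dist x (ctr (Cl b)))) (sub_nonneg.2 hν)
    linarith
  · obtain rfl : a = j := (hpart z hzX).unique hza hz
    exact hlt.not_gt <| dist_lt_two_mul_of_dist_lt
      (hzgood.trans_le (mul_le_mul_of_nonneg_right (min_le_left _ _) hR)) (dist_ctr_le_rad hxa)

lemma localQ_eq_one_iff {ν ρ : ℝ} (h : ¬ LocalConfused Cl ν ρ z x) :
    localQ Cl ν ρ z x = 1 ↔ SameCluster Cl z x := by
  unfold localQ
  split_ifs with hs <;> simp [hs]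

lemma sameCluster_iff_mem_of_mem (hpart : ∀ x ∈ X, ∃! i, x ∈ Cl i) (hzX : z ∈ X) {j : Fin k}
    (hz : z ∈ Cl j) : SameCluster Cl z x ↔ x ∈ Cl j :=
  ⟨fun ⟨_, hza, hxa⟩ => (hpart z hzX).unique hza hz ▸ hxa, fun hxj => ⟨j, hz, hxj⟩⟩

end Oracle

theorem stmt11_general {m k : ℕ} (X : Finset (EuclideanSpace ℝ (Fin m)))
    (Cl : Fin k → Finset (EuclideanSpace ℝ (Fin m)))
    (hsub : ∀ i, Cl i ⊆ X)
    (hpart : ∀ x ∈ X, ∃! i, x ∈ Cl i)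
    (γ : ℝ)
    (hmargin : ∀ i, ∀ x ∈ Cl i, ∀ y ∈ X, y ∉ Cl i →
      γ * dist x (ctr (Cl i)) < dist y (ctr (Cl i)))
    (ν ρ : ℝ) (hν : 1 ≤ ν)
    (z : Fin k → EuclideanSpace ℝ (Fin m))
    (hz : ∀ j, z j ∈ Cl j)
    (hzgood : ∀ j, dist (z j) (ctr (Cl j)) < min (2 * ρ - 1) (γ - ν + 1) * rad (Cl j)) :
    ∀ x ∈ X,
      (∀ j, ¬ LocalConfused Cl ν ρ (z j) x) ∧
      (∃! j, localQ Cl ν ρ (z j) x = 1) ∧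
      (∀ j, localQ Cl ν ρ (z j) x = 1 → x ∈ Cl j) := by
  intro x hx
  have hzX j : z j ∈ X := hsub j (hz j)
  have hconf j : ¬ LocalConfused Cl ν ρ (z j) x :=
    not_localConfused_of_dist_ctr_lt hpart hmargin hν (hzX j) (hz j) (hzgood j) hx
  have hQ j : localQ Cl ν ρ (z j) x = 1 ↔ x ∈ Cl j := by
    rw [localQ_eq_one_iff (hconf j), sameCluster_iff_mem_of_mem hpart (hzX j) (hz j)]
  exact ⟨hconf, (existsUnique_congr hQ).2 (hpart x hx), fun j => (hQ j).1⟩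

/-- Under the γ-margin property, if every cluster C_j has a representative
z_j with d(z_j, μ_j) < min(2ρ−1, γ−ν+1)·r(C_j), then no pair (z_j, x) is confused for the
(ν,ρ) local distance-weak oracle, and for every x ∈ X exactly one index j has
Q(z_j, x) = 1, with x ∈ C_j for that index. -/
theorem stmt11 {m k : ℕ} (X : Finset (EuclideanSpace ℝ (Fin m)))
    (Cl : Fin k → Finset (EuclideanSpace ℝ (Fin m)))
    (hsub : ∀ i, Cl i ⊆ X) (hne : ∀ i, (Cl i).Nonempty)
    (hpart : ∀ x ∈ X, ∃! i, x ∈ Cl i)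
    (γ : ℝ) (hγ : 1 ≤ γ)
    (hmargin : ∀ i, ∀ x ∈ Cl i, ∀ y ∈ X, y ∉ Cl i →
      γ * dist x (ctr (Cl i)) < dist y (ctr (Cl i)))
    (ν ρ : ℝ) (hν : 1 ≤ ν) (hρ0 : 0 < ρ) (hρ1 : ρ ≤ 1)
    (z : Fin k → EuclideanSpace ℝ (Fin m))
    (hz : ∀ j, z j ∈ Cl j)
    (hzgood : ∀ j, dist (z j) (ctr (Cl j)) < min (2 * ρ - 1) (γ - ν + 1) * rad (Cl j)) :
    ∀ x ∈ X,
      (∀ j, ¬ LocalConfused Cl ν ρ (z j) x) ∧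
      (∃! j, localQ Cl ν ρ (z j) x = 1) ∧
      (∀ j, localQ Cl ν ρ (z j) x = 1 → x ∈ Cl j) :=
  stmt11_general X Cl hsub hpart γ hmargin ν ρ hν z hz hzgood
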